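/- arXiv:2604.21047 — 2 statements merged into one kernel-verified Lean document; each statement's English description precedes it below -/
import Mathlib

section
/- Let μ and ω be finite measures on a measurable space, let Q be a measurable set and P₀ ⊆ Q a measurable subset with μ(P₀) > 0, ω(Q) > 0, and suppose ω(P₀)/μ(P₀) ≤ (1/16)·ω(Q)/μ(Q). If Q is partitioned into countably many disjoint measurable sets (P_i) such that P₀ is a union of some of the P_i, then ∑_i ω(P_i)^{1/2} μ(P_i)^{1/2} ≤ (1 - (1/4)·μ(P₀)/μ(Q)) · ω(Q)^{1/2} μ(Q)^{1/2}. -/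
open MeasureTheory

/-- Cauchy–Schwarz for tsums of square roots. -/
lemma tsum_sqrt_mul_sqrt_le {ι : Type*} {f g : ι → ℝ}
    (hf0 : ∀ i, 0 ≤ f i) (hg0 : ∀ i, 0 ≤ g i)
    (hf : Summable f) (hg : Summable g) :
    ∑' i, Real.sqrt (f i) * Real.sqrt (g i) ≤
      Real.sqrt (∑' i, f i) * Real.sqrt (∑' i, g i) := by
  have hc : Summable fun i => Real.sqrt (f i) * Real.sqrt (g i) := by
    refine Summable.of_nonneg_of_le (fun i => by positivity)
      (fun i => ?_) ((hf.add hg).div_const 2)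
    have h1 := Real.sq_sqrt (hf0 i)
    have h2 := Real.sq_sqrt (hg0 i)
    nlinarith [sq_nonneg (Real.sqrt (f i) - Real.sqrt (g i))]
  refine Summable.tsum_le_of_sum_le hc fun s => ?_
  refine (Real.sum_sqrt_mul_sqrt_le s hf0 hg0).trans ?_
  have h1 : ∑ i ∈ s, f i ≤ ∑' i, f i := Summable.sum_le_tsum s (fun i _ => hf0 i) hf
  have h2 : ∑ i ∈ s, g i ≤ ∑' i, g i := Summable.sum_le_tsum s (fun i _ => hg0 i) hg
  exact mul_le_mul (Real.sqrt_le_sqrt h1) (Real.sqrt_le_sqrt h2)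
    (Real.sqrt_nonneg _) (Real.sqrt_nonneg _)

set_option maxHeartbeats 1600000 in
/-- Low-density-jump case of the decay lemma. -/
theorem decay_low_density_jump {α : Type*} [MeasurableSpace α]
    (μ ω : Measure α) [IsFiniteMeasure μ] [IsFiniteMeasure ω]
    (Q P₀ : Set α) (hQ : MeasurableSet Q) (hP₀ : MeasurableSet P₀)
    (hP₀Q : P₀ ⊆ Q) (hμP₀ : 0 < μ P₀) (hωQ : 0 < ω Q)
    (hratio : (ω P₀).toReal / (μ P₀).toReal ≤ (1 / 16) * ((ω Q).toReal / (μ Q).toReal))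
    (P : ℕ → Set α) (hPmeas : ∀ i, MeasurableSet (P i))
    (hdisj : Pairwise (Function.onFun Disjoint P))
    (hcover : (⋃ i, P i) = Q)
    (S : Set ℕ) (hS : (⋃ i ∈ S, P i) = P₀) :
    ∑' i, Real.sqrt (ω (P i)).toReal * Real.sqrt (μ (P i)).toReal ≤
      (1 - (1 / 4) * (μ P₀).toReal / (μ Q).toReal) *
        (Real.sqrt (ω Q).toReal * Real.sqrt (μ Q).toReal) := by
  set a : ℕ → ℝ := fun i => (ω (P i)).toReal with ha
  set b : ℕ → ℝ := fun i => (μ (P i)).toReal with hb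
  -- basic facts
  have ha0 : ∀ i, 0 ≤ a i := fun i => ENNReal.toReal_nonneg
  have hb0 : ∀ i, 0 ≤ b i := fun i => ENNReal.toReal_nonneg
  have hωU : ∑' i, ω (P i) = ω Q := by
    rw [← measure_iUnion hdisj hPmeas, hcover]
  have hμU : ∑' i, μ (P i) = μ Q := by
    rw [← measure_iUnion hdisj hPmeas, hcover]
  have hSa : Summable a := by
    apply ENNReal.summable_toReal
    rw [hωU]; exact (measure_ne_top ω Q)
  have hSb : Summable b := by
    apply ENNReal.summable_toReal
    rw [hμU]; exact (measure_ne_top μ Q)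
  -- measure identities for the pieces inside / outside S
  have hωS : ∑' i : S, a i = (ω P₀).toReal := by
    rw [← hS, measure_biUnion (Set.to_countable S)
      (fun i _ j _ hij => hdisj hij) (fun i _ => hPmeas i),
      ENNReal.tsum_toReal_eq (fun i => measure_ne_top ω _)]
  have hμS : ∑' i : S, b i = (μ P₀).toReal := by
    rw [← hS, measure_biUnion (Set.to_countable S)
      (fun i _ j _ hij => hdisj hij) (fun i _ => hPmeas i),
      ENNReal.tsum_toReal_eq (fun i => measure_ne_top μ _)]
  have hcompl : (⋃ i ∈ Sᶜ, P i) = Q \ P₀ := by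
    apply Set.eq_of_subset_of_subset
    · rintro x hx
      simp only [Set.mem_iUnion] at hx
      obtain ⟨i, hiS, hxi⟩ := hx
      refine ⟨hcover ▸ Set.mem_iUnion.2 ⟨i, hxi⟩, fun hxP₀ => ?_⟩
      rw [← hS] at hxP₀
      simp only [Set.mem_iUnion] at hxP₀
      obtain ⟨j, hjS, hxj⟩ := hxP₀
      exact hdisj (fun h : i = j => hiS (h ▸ hjS)) (Set.singleton_subset_iff.2 hxi)
        (Set.singleton_subset_iff.2 hxj) rfl
    · rintro x ⟨hxQ, hxP₀⟩
      rw [← hcover] at hxQ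
      obtain ⟨i, hxi⟩ := Set.mem_iUnion.1 hxQ
      refine Set.mem_iUnion.2 ⟨i, Set.mem_iUnion.2 ⟨fun hiS => hxP₀ ?_, hxi⟩⟩
      rw [← hS]
      exact Set.mem_iUnion.2 ⟨i, Set.mem_iUnion.2 ⟨hiS, hxi⟩⟩
  have hωSc : ∑' i : ↥Sᶜ, a i = (ω (Q \ P₀)).toReal := by
    rw [← hcompl, measure_biUnion (Set.to_countable Sᶜ)
      (fun i _ j _ hij => hdisj hij) (fun i _ => hPmeas i),
      ENNReal.tsum_toReal_eq (fun i => measure_ne_top ω _)]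
  have hμSc : ∑' i : ↥Sᶜ, b i = (μ (Q \ P₀)).toReal := by
    rw [← hcompl, measure_biUnion (Set.to_countable Sᶜ)
      (fun i _ j _ hij => hdisj hij) (fun i _ => hPmeas i),
      ENNReal.tsum_toReal_eq (fun i => measure_ne_top μ _)]
  -- real-number abbreviations
  set A : ℝ := (ω Q).toReal with hA
  set B : ℝ := (μ Q).toReal with hB
  set A0 : ℝ := (ω P₀).toReal with hA0
  set B0 : ℝ := (μ P₀).toReal with hB0
  have hA0nn : 0 ≤ A0 := ENNReal.toReal_nonneg
  have hApos : 0 < A := ENNReal.toReal_pos hωQ.ne' (measure_ne_top ω Q)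
  have hB0pos : 0 < B0 := ENNReal.toReal_pos hμP₀.ne' (measure_ne_top μ P₀)
  have hB0B : B0 ≤ B :=
    ENNReal.toReal_mono (measure_ne_top μ Q) (measure_mono hP₀Q)
  have hBpos : 0 < B := lt_of_lt_of_le hB0pos hB0B
  have hμdiff : (μ (Q \ P₀)).toReal = B - B0 := by
    rw [measure_diff hP₀Q hP₀.nullMeasurableSet (measure_ne_top μ P₀),
      ENNReal.toReal_sub_of_le (measure_mono hP₀Q) (measure_ne_top μ Q)]
  have hωdiff : (ω (Q \ P₀)).toReal ≤ A :=
    ENNReal.toReal_mono (measure_ne_top ω Q) (measure_mono Set.diff_subset)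
  -- split the sum over S and Sᶜ
  have hsplit : (∑' i : S, Real.sqrt (a i) * Real.sqrt (b i)) +
      (∑' i : ↥Sᶜ, Real.sqrt (a i) * Real.sqrt (b i)) =
      ∑' i, Real.sqrt (a i) * Real.sqrt (b i) := by
    apply Summable.tsum_add_tsum_compl (s := S)
      (f := fun i => Real.sqrt (a i) * Real.sqrt (b i))
    · refine Summable.of_nonneg_of_le (fun i => ?_) (fun i => ?_)
        (((hSa.subtype S).add (hSb.subtype S)).div_const 2)
      · simp only [Function.comp_apply]; positivity
      · simp only [Function.comp_apply]
        have h1 := Real.sq_sqrt (ha0 i)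
        have h2 := Real.sq_sqrt (hb0 i)
        nlinarith [sq_nonneg (Real.sqrt (a i) - Real.sqrt (b i))]
    · refine Summable.of_nonneg_of_le (fun i => ?_) (fun i => ?_)
        (((hSa.subtype Sᶜ).add (hSb.subtype Sᶜ)).div_const 2)
      · simp only [Function.comp_apply]; positivity
      · simp only [Function.comp_apply]
        have h1 := Real.sq_sqrt (ha0 i)
        have h2 := Real.sq_sqrt (hb0 i)
        nlinarith [sq_nonneg (Real.sqrt (a i) - Real.sqrt (b i))]
  rw [← hsplit]
  -- Cauchy–Schwarz on each part
  have hCS1 : (∑' i : S, Real.sqrt (a i) * Real.sqrt (b i)) ≤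
      Real.sqrt A0 * Real.sqrt B0 := by
    have := tsum_sqrt_mul_sqrt_le (f := fun i : S => a i) (g := fun i : S => b i)
      (fun i => ha0 i) (fun i => hb0 i) (hSa.subtype S) (hSb.subtype S)
    rwa [hωS, hμS] at this
  have hCS2 : (∑' i : ↥Sᶜ, Real.sqrt (a i) * Real.sqrt (b i)) ≤
      Real.sqrt A * Real.sqrt (B - B0) := by
    have := tsum_sqrt_mul_sqrt_le (f := fun i : ↥Sᶜ => a i) (g := fun i : ↥Sᶜ => b i)
      (fun i => ha0 i) (fun i => hb0 i) (hSa.subtype Sᶜ) (hSb.subtype Sᶜ)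
    rw [hωSc, hμSc, hμdiff] at this
    exact this.trans (by gcongr)
  -- numeric estimates
  have hA0le : A0 ≤ (1 / 16) * (A / B) * B0 := by
    have := (div_le_iff₀ hB0pos).1 hratio
    linarith [this]
  have hbound1 : Real.sqrt A0 * Real.sqrt B0 ≤
      (1 / 4) * (B0 / B) * (Real.sqrt A * Real.sqrt B) := by
    rw [← Real.sqrt_mul hA0nn, ← Real.sqrt_mul hApos.le]
    have key : A0 * B0 ≤ ((1 / 4) * (B0 / B)) ^ 2 * (A * B) := by
      have e : (1 / 16) * (A / B) * B0 * B0 = ((1 / 4) * (B0 / B)) ^ 2 * (A * B) := by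
        field_simp; ring
      have h := mul_le_mul_of_nonneg_right hA0le hB0pos.le
      linarith
    calc Real.sqrt (A0 * B0) ≤ Real.sqrt (((1 / 4) * (B0 / B)) ^ 2 * (A * B)) :=
          Real.sqrt_le_sqrt key
      _ = (1 / 4) * (B0 / B) * Real.sqrt (A * B) := by
          rw [Real.sqrt_mul (by positivity), Real.sqrt_sq (by positivity)]
  have hbound2 : Real.sqrt A * Real.sqrt (B - B0) ≤
      (1 - (1 / 2) * (B0 / B)) * (Real.sqrt A * Real.sqrt B) := by
    have hx1 : B0 / B ≤ 1 := (div_le_one hBpos).2 hB0B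
    have key : Real.sqrt (B - B0) ≤ (1 - (1 / 2) * (B0 / B)) * Real.sqrt B := by
      have h1 : B - B0 ≤ ((1 - (1 / 2) * (B0 / B)) * Real.sqrt B) ^ 2 := by
        rw [mul_pow, Real.sq_sqrt hBpos.le]
        have : (1 - (1 / 2) * (B0 / B)) ^ 2 * B - (B - B0) =
            ((1 / 2) * (B0 / B)) ^ 2 * B := by field_simp; ring
        nlinarith [sq_nonneg ((1 / 2) * (B0 / B)), hBpos]
      calc Real.sqrt (B - B0) ≤
            Real.sqrt (((1 - (1 / 2) * (B0 / B)) * Real.sqrt B) ^ 2) :=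
            Real.sqrt_le_sqrt h1
        _ = (1 - (1 / 2) * (B0 / B)) * Real.sqrt B := by
            rw [Real.sqrt_sq (by nlinarith [Real.sqrt_nonneg B, hx1, hBpos])]
      -- need nonnegativity of 1 - (1/2)*(B0/B)
    calc Real.sqrt A * Real.sqrt (B - B0) ≤
          Real.sqrt A * ((1 - (1 / 2) * (B0 / B)) * Real.sqrt B) := by
          exact mul_le_mul_of_nonneg_left key (Real.sqrt_nonneg A)
      _ = (1 - (1 / 2) * (B0 / B)) * (Real.sqrt A * Real.sqrt B) := by ring
  have hfinal : (1 / 4) * (B0 / B) * (Real.sqrt A * Real.sqrt B) +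
      (1 - (1 / 2) * (B0 / B)) * (Real.sqrt A * Real.sqrt B) =
      (1 - (1 / 4) * B0 / B) * (Real.sqrt A * Real.sqrt B) := by
    have : (1 / 4) * (B0 / B) + (1 - (1 / 2) * (B0 / B)) = 1 - (1 / 4) * B0 / B := by
      field_simp; ring
    rw [← this, add_mul]
  linarith [hCS1, hCS2, hbound1, hbound2]
end

section
/- Let μ and ω be finite measures, Q a measurable set with μ(Q), ω(Q) > 0, and P₀ ⊆ Q measurable with ω(P₀)/μ(P₀) ≥ 16·ω(Q)/μ(Q) and μ(P₀) > 0. If (P_i) is a countable measurable partition of Q such that P₀ is a union of some of the P_i, then ∑_i ω(P_i)^{1/2} μ(P_i)^{1/2} ≤ (1 − (1/4)·ω(P₀)/ω(Q)) · ω(Q)^{1/2} μ(Q)^{1/2}. -/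
open MeasureTheory

private lemma sq_le_imp {x y : ℝ} (hx : 0 ≤ x) (hy : 0 ≤ y) (h : x ^ 2 ≤ y ^ 2) : x ≤ y := by
  have := Real.sqrt_le_sqrt h
  rwa [Real.sqrt_sq hx, Real.sqrt_sq hy] at this

private lemma cs_finset (s : Finset ℕ) (a b : ℕ → ℝ) (ha : ∀ i, 0 ≤ a i) (hb : ∀ i, 0 ≤ b i)
    (A B : ℝ) (hA : ∑ i ∈ s, a i ≤ A) (hB : ∑ i ∈ s, b i ≤ B) :
    ∑ i ∈ s, Real.sqrt (a i) * Real.sqrt (b i) ≤ Real.sqrt A * Real.sqrt B := by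
  refine (Real.sum_sqrt_mul_sqrt_le s ha hb).trans ?_
  exact mul_le_mul (Real.sqrt_le_sqrt hA) (Real.sqrt_le_sqrt hB) (Real.sqrt_nonneg _)
    (Real.sqrt_nonneg _)

private lemma arith (A B W M : ℝ) (hA : 0 ≤ A) (hB : 0 ≤ B) (hW : 0 < W) (hM : 0 < M)
    (hAW : A ≤ W) (hBM : B ≤ M) (hr : 16 * W * B ≤ A * M) :
    Real.sqrt A * Real.sqrt B + Real.sqrt (W - A) * Real.sqrt M ≤
      (1 - 1 / 4 * A / W) * (Real.sqrt W * Real.sqrt M) := by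
  have sA := Real.sq_sqrt hA
  have sB := Real.sq_sqrt hB
  have sW := Real.sq_sqrt hW.le
  have sM := Real.sq_sqrt hM.le
  have sWA := Real.sq_sqrt (by linarith : (0:ℝ) ≤ W - A)
  have nA := Real.sqrt_nonneg A
  have nB := Real.sqrt_nonneg B
  have nW := Real.sqrt_nonneg W
  have nM := Real.sqrt_nonneg M
  have nWA := Real.sqrt_nonneg (W - A)
  -- first bound
  have h1 : Real.sqrt A * Real.sqrt B ≤ 1 / 4 * A / W * (Real.sqrt W * Real.sqrt M) := by
    have e1 : (Real.sqrt A * Real.sqrt B) ^ 2 = A * B := by rw [mul_pow, sA, sB]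
    have e2 : (1 / 4 * A / W * (Real.sqrt W * Real.sqrt M)) ^ 2 = A ^ 2 * M / (16 * W) := by
      rw [mul_pow, mul_pow, sW, sM]; field_simp; ring
    have hsq : (Real.sqrt A * Real.sqrt B) ^ 2 ≤
        (1 / 4 * A / W * (Real.sqrt W * Real.sqrt M)) ^ 2 := by
      rw [e1, e2, le_div_iff₀ (by positivity)]
      nlinarith [mul_le_mul_of_nonneg_left hr hA]
    exact sq_le_imp (by positivity) (by positivity) hsq
  -- second bound
  have h2 : Real.sqrt (W - A) * Real.sqrt M ≤ (1 - A / (2 * W)) * (Real.sqrt W * Real.sqrt M) := by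
    have hc : 0 ≤ 1 - A / (2 * W) := by
      rw [sub_nonneg, div_le_one (by positivity)]; linarith
    have hsq : (Real.sqrt (W - A) * Real.sqrt M) ^ 2 ≤
        ((1 - A / (2 * W)) * (Real.sqrt W * Real.sqrt M)) ^ 2 := by
      have expand : (1 - A / (2 * W)) ^ 2 * (W * M) - (W - A) * M
          = (A / (2 * W)) ^ 2 * W * M := by field_simp; ring
      have hnn : 0 ≤ (A / (2 * W)) ^ 2 * W * M := by positivity
      calc (Real.sqrt (W - A) * Real.sqrt M) ^ 2 = (W - A) * M := by
            rw [mul_pow, sWA, sM]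
        _ ≤ (1 - A / (2 * W)) ^ 2 * (W * M) := by linarith
        _ = ((1 - A / (2 * W)) * (Real.sqrt W * Real.sqrt M)) ^ 2 := by
            rw [mul_pow, mul_pow, sW, sM]
    exact sq_le_imp (by positivity) (by positivity) hsq
  have hcoef : 1 / 4 * A / W + (1 - A / (2 * W)) = 1 - 1 / 4 * A / W := by
    field_simp; ring
  calc Real.sqrt A * Real.sqrt B + Real.sqrt (W - A) * Real.sqrt M
      ≤ 1 / 4 * A / W * (Real.sqrt W * Real.sqrt M)
        + (1 - A / (2 * W)) * (Real.sqrt W * Real.sqrt M) := add_le_add h1 h2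
    _ = (1 - 1 / 4 * A / W) * (Real.sqrt W * Real.sqrt M) := by rw [← add_mul, hcoef]

/-- High-density-jump case of the decay lemma. -/
theorem decay_high_density_jump {α : Type*} [MeasurableSpace α]
    (μ ω : Measure α) [IsFiniteMeasure μ] [IsFiniteMeasure ω]
    (Q P₀ : Set α) (hQ : MeasurableSet Q) (hP₀ : MeasurableSet P₀)
    (hP₀Q : P₀ ⊆ Q) (hμQ : 0 < μ Q) (hωQ : 0 < ω Q) (hμP₀ : 0 < μ P₀)
    (hratio : (ω P₀).toReal / (μ P₀).toReal ≥ 16 * ((ω Q).toReal / (μ Q).toReal))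
    (P : ℕ → Set α) (hPmeas : ∀ i, MeasurableSet (P i))
    (hdisj : Pairwise (Function.onFun Disjoint P))
    (hcover : (⋃ i, P i) = Q)
    (S : Set ℕ) (hS : (⋃ i ∈ S, P i) = P₀) :
    ∑' i, Real.sqrt (ω (P i)).toReal * Real.sqrt (μ (P i)).toReal ≤
      (1 - (1 / 4) * (ω P₀).toReal / (ω Q).toReal) *
        (Real.sqrt (ω Q).toReal * Real.sqrt (μ Q).toReal) := by
  classical
  set a : ℕ → ℝ := fun i => (ω (P i)).toReal with ha_def
  set b : ℕ → ℝ := fun i => (μ (P i)).toReal with hb_def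
  have ha : ∀ i, 0 ≤ a i := fun i => ENNReal.toReal_nonneg
  have hb : ∀ i, 0 ≤ b i := fun i => ENNReal.toReal_nonneg
  set A := (ω P₀).toReal
  set B := (μ P₀).toReal
  set W := (ω Q).toReal
  set M := (μ Q).toReal
  have hωQt : ω Q ≠ ⊤ := measure_ne_top ω Q
  have hμQt : μ Q ≠ ⊤ := measure_ne_top μ Q
  have hW : 0 < W := ENNReal.toReal_pos hωQ.ne' hωQt
  have hM : 0 < M := ENNReal.toReal_pos hμQ.ne' hμQt
  have hB : 0 < B := ENNReal.toReal_pos hμP₀.ne' (measure_ne_top μ P₀)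
  have hAW : A ≤ W := ENNReal.toReal_mono hωQt (measure_mono hP₀Q)
  have hBM : B ≤ M := ENNReal.toReal_mono hμQt (measure_mono hP₀Q)
  have hr : 16 * W * B ≤ A * M := by
    rw [ge_iff_le, le_div_iff₀ hB] at hratio
    have h := mul_le_mul_of_nonneg_right hratio hM.le
    have he : 16 * (W / M) * B * M = 16 * W * B := by field_simp
    linarith
  have hA : 0 ≤ A := ENNReal.toReal_nonneg
  -- summability
  have hsumω : Summable a := by
    apply ENNReal.summable_toReal
    rw [← measure_iUnion hdisj hPmeas, hcover]; exact hωQt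
  have hsumμ : Summable b := by
    apply ENNReal.summable_toReal
    rw [← measure_iUnion hdisj hPmeas, hcover]; exact hμQt
  have hf_le : ∀ i, Real.sqrt (a i) * Real.sqrt (b i) ≤ (a i + b i) / 2 := by
    intro i
    nlinarith [Real.sq_sqrt (ha i), Real.sq_sqrt (hb i),
      sq_nonneg (Real.sqrt (a i) - Real.sqrt (b i))]
  have hsumf : Summable fun i => Real.sqrt (a i) * Real.sqrt (b i) := by
    apply Summable.of_nonneg_of_le (fun i => by positivity) hf_le
    exact (hsumω.add hsumμ).div_const 2
  -- per-finset bounds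
  refine Summable.tsum_le_of_sum_le hsumf fun s => ?_
  have hPQ : ∀ i, P i ⊆ Q := fun i => hcover ▸ Set.subset_iUnion P i
  -- sums over finsets are measures of unions
  have hsum_eq : ∀ (ν : Measure α) [IsFiniteMeasure ν] (t : Finset ℕ),
      ∑ i ∈ t, (ν (P i)).toReal = (ν (⋃ i ∈ t, P i)).toReal := by
    intro ν _ t
    rw [measure_biUnion_finset (hdisj.set_pairwise _) (fun i _ => hPmeas i),
      ENNReal.toReal_sum (fun i _ => measure_ne_top ν _)]
  set t1 := s.filter (· ∈ S)
  set t2 := s.filter (· ∉ S)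
  have hsplit : ∑ i ∈ s, Real.sqrt (a i) * Real.sqrt (b i)
      = ∑ i ∈ t1, Real.sqrt (a i) * Real.sqrt (b i)
        + ∑ i ∈ t2, Real.sqrt (a i) * Real.sqrt (b i) :=
    (Finset.sum_filter_add_sum_filter_not s _ _).symm
  have hsub1 : (⋃ i ∈ t1, P i) ⊆ P₀ := by
    rw [← hS]
    refine Set.iUnion₂_subset fun i hi => ?_
    have : i ∈ S := (Finset.mem_filter.1 hi).2
    exact Set.subset_iUnion₂ (s := fun i (_ : i ∈ S) => P i) i this
  have hsub2 : (⋃ i ∈ t2, P i) ⊆ Q \ P₀ := by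
    refine Set.iUnion₂_subset fun i hi => ?_
    have hiS : i ∉ S := (Finset.mem_filter.1 hi).2
    refine Set.subset_diff.2 ⟨hPQ i, ?_⟩
    rw [← hS]
    refine Set.disjoint_iUnion₂_right.2 fun j hj => hdisj fun h => hiS (h ▸ hj)
  have bound1 : ∑ i ∈ t1, Real.sqrt (a i) * Real.sqrt (b i) ≤ Real.sqrt A * Real.sqrt B := by
    refine cs_finset t1 a b ha hb A B ?_ ?_
    · rw [hsum_eq ω t1]; exact ENNReal.toReal_mono (measure_ne_top ω _) (measure_mono hsub1)
    · rw [hsum_eq μ t1]; exact ENNReal.toReal_mono (measure_ne_top μ _) (measure_mono hsub1)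
  have hdiff : (ω (Q \ P₀)).toReal = W - A := by
    rw [measure_diff hP₀Q hP₀.nullMeasurableSet (measure_ne_top ω P₀),
      ENNReal.toReal_sub_of_le (measure_mono hP₀Q) hωQt]
  have bound2 : ∑ i ∈ t2, Real.sqrt (a i) * Real.sqrt (b i)
      ≤ Real.sqrt (W - A) * Real.sqrt M := by
    refine cs_finset t2 a b ha hb (W - A) M ?_ ?_
    · rw [hsum_eq ω t2, ← hdiff]
      exact ENNReal.toReal_mono (measure_ne_top ω _) (measure_mono hsub2)
    · rw [hsum_eq μ t2]
      exact ENNReal.toReal_mono hμQt (measure_mono ((Set.iUnion₂_subset fun i hi => hPQ i)))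
  calc ∑ i ∈ s, Real.sqrt (a i) * Real.sqrt (b i)
      ≤ Real.sqrt A * Real.sqrt B + Real.sqrt (W - A) * Real.sqrt M := by
        rw [hsplit]; exact add_le_add bound1 bound2
    _ ≤ (1 - 1 / 4 * A / W) * (Real.sqrt W * Real.sqrt M) :=
        arith A B W M hA hB.le hW hM hAW hBM hr
end
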